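/- Let (Ω, 𝒜, P) be a probability space, let n, d ≥ 1 and 1 ≤ m ≤ d, let μ : Fin d → ℝ satisfy 0 < μ j < 1 for every j ≥ m, and let X : Fin n → Fin d → Ω → ℕ have left-repeated structure with midpoint m and parameter μ. Let y : Fin d → ℕ and k : Fin d → ℕ satisfy: y j ≤ 1 and y j ≤ k j ≤ n for every j ≥ m, and k j = k m and y j = y m for every j < m. Then P({ω : for every j ∈ Fin d, y j + Σ_{i < n−1} X i j (ω) = k j}) / P({ω : for every j ∈ Fin d, Σ_{i < n} X i j (ω) = k j}) = ∏_{j ≥ m} (if y j = 1 then (k j / n) / μ j else (1 − k j / n) / (1 − μ j)); in particular the denominator probability is strictly positive. (Partial Ratio Equality, side = left: the Bayesian decision ratio on a population whose attributes below the midpoint are exact copies of attribute m equals the likelihood ratio test statistic clipped to the attributes from m to d.) -/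

import Mathlib

/-! Both events only constrain the column sums over the attributes `j ≥ m`: the attributes below
the midpoint are copies of attribute `m`, so their constraints repeat that of `m`. Those columns
are independent, and within a column the records are i.i.d. Bernoulli(`μ j`), so each event has
as probability a product of binomial masses, over `n - 1` records at `k j - y j` for the
numerator and over `n` records at `k j` for the denominator. Pascal-type identities
`n C(n-1, k-1) = k C(n, k)` and `n C(n-1, k) = (n-k) C(n, k)` turn each quotient into
`(k/n)/μ` or `(1 - k/n)/(1 - μ)`. -/

open MeasureTheory ProbabilityTheory Finset

/-- `X : Fin n → Fin d → Ω → ℕ` has *left-repeated structure* with midpoint `m`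
(in one-based terms, `1 ≤ m ≤ d`, corresponding to the zero-based index `m - 1`)
and parameter `μ`: the subfamily `(X i j)` over all records `i` and attributes
`j ≥ m` (zero-based `m - 1 ≤ (j : ℕ)`) is mutually independent, each such `X i j`
is `{0,1}`-valued with `P(X i j = 1) = μ j`, and every attribute `j < m`
(zero-based `(j : ℕ) < m - 1`) is an exact copy of attribute `m` (zero-based
index `m - 1`). -/
def LeftRepeated {Ω : Type*} [MeasurableSpace Ω] (P : Measure Ω)
    {n d : ℕ} (m : ℕ) (X : Fin n → Fin d → Ω → ℕ) (μ : Fin d → ℝ) : Prop :=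
  (∀ i j, Measurable (X i j)) ∧
  iIndepFun
    (fun p : Fin n × {j : Fin d // m - 1 ≤ (j : ℕ)} => X p.1 p.2.1) P ∧
  (∀ i, ∀ j : Fin d, m - 1 ≤ (j : ℕ) →
    (∀ ω, X i j ω = 0 ∨ X i j ω = 1) ∧ (P {ω | X i j ω = 1}).toReal = μ j) ∧
  (∀ i, ∀ j : Fin d, (j : ℕ) < m - 1 →
    ∀ jm : Fin d, (jm : ℕ) = m - 1 → X i j = X i jm)

def binomialMass (n k : ℕ) (v : ℝ) : ℝ := n.choose k * v ^ k * (1 - v) ^ (n - k)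

lemma Finset.sum_powersetCard_prod_ite {ι : Type*} [DecidableEq ι] (R : Finset ι) (t : ℕ)
    (v : ℝ) :
    ∑ T ∈ R.powersetCard t, ∏ i ∈ R, (if i ∈ T then v else 1 - v) = binomialMass #R t v := by
  have hterm : ∀ T ∈ R.powersetCard t,
      ∏ i ∈ R, (if i ∈ T then v else 1 - v) = v ^ t * (1 - v) ^ (#R - t) := by
    intro T hT
    obtain ⟨hTR, rfl⟩ := mem_powersetCard.mp hT
    rw [prod_ite, filter_not, filter_mem_eq_inter, inter_eq_right.mpr hTR, prod_const, prod_const,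
      card_sdiff_of_subset hTR]
  rw [sum_congr rfl hterm, sum_const, card_powersetCard, nsmul_eq_mul, binomialMass, mul_assoc]

lemma binomialMass_pos {n k : ℕ} {v : ℝ} (hkn : k ≤ n) (hv0 : 0 < v) (hv1 : v < 1) :
    0 < binomialMass n k v := by
  have := Nat.choose_pos hkn
  have : 0 < 1 - v := by linarith
  unfold binomialMass
  positivity

lemma binomialMass_mul_succ_mul (n k : ℕ) (v : ℝ) :
    binomialMass n k v * ((n + 1) * v) = (k + 1) * binomialMass (n + 1) (k + 1) v := by
  have hchoose : ((n + 1 : ℕ) : ℝ) * n.choose k = (n + 1).choose (k + 1) * (k + 1 : ℕ) := by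
    exact_mod_cast Nat.add_one_mul_choose_eq n k
  unfold binomialMass
  rw [Nat.add_sub_add_right, pow_succ]
  push_cast at hchoose
  linear_combination v ^ (k + 1) * (1 - v) ^ (n - k) * hchoose

lemma binomialMass_mul_succ_mul_one_sub (n k : ℕ) (v : ℝ) :
    binomialMass n k v * ((n + 1) * (1 - v)) = (n + 1 - k : ℕ) * binomialMass (n + 1) k v := by
  have hchoose : (n.choose k : ℝ) * (n + 1 : ℕ) = (n + 1).choose k * (n + 1 - k : ℕ) := by
    exact_mod_cast Nat.choose_mul_succ_eq n k
  unfold binomialMass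
  rcases le_or_gt k n with hk | hk
  · rw [show n + 1 - k = n - k + 1 by omega] at hchoose ⊢
    rw [pow_succ]
    push_cast at hchoose ⊢
    linear_combination v ^ k * (1 - v) ^ (n - k) * (1 - v) * hchoose
  · simp [Nat.choose_eq_zero_of_lt hk, show n + 1 - k = 0 by omega]

lemma binomialMass_pred_div {n k y : ℕ} {v : ℝ} (hn : 1 ≤ n) (hy : y ≤ 1) (hyk : y ≤ k)
    (hkn : k ≤ n) (hv0 : 0 < v) (hv1 : v < 1) :
    binomialMass (n - 1) (k - y) v / binomialMass n k v =
      if y = 1 then ((k : ℝ) / n) / v else (1 - (k : ℝ) / n) / (1 - v) := by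
  obtain ⟨n, rfl⟩ := Nat.exists_eq_add_of_le' hn
  have hpos := binomialMass_pos hkn hv0 hv1
  have : 0 < 1 - v := by linarith
  rw [Nat.add_sub_cancel, div_eq_iff hpos.ne']
  interval_cases y
  · have h := binomialMass_mul_succ_mul_one_sub n k v
    rw [Nat.cast_sub hkn] at h
    push_cast at h ⊢
    field_simp
    linear_combination h
  · obtain ⟨k, rfl⟩ := Nat.exists_eq_add_of_le' hyk
    have h := binomialMass_mul_succ_mul n k v
    push_cast at h ⊢
    field_simp
    linear_combination h

structure IsIndepBernoulli {Ω ι : Type*} [MeasurableSpace Ω] (P : Measure Ω)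
    (X : ι → Ω → ℕ) (p : ι → ℝ) : Prop where
  measurable : ∀ a, Measurable (X a)
  indep : iIndepFun X P
  zero_or_one : ∀ a ω, X a ω = 0 ∨ X a ω = 1
  measureReal_eq_one : ∀ a, P.real {ω | X a ω = 1} = p a

namespace IsIndepBernoulli

variable {Ω ι : Type*} [MeasurableSpace Ω] {P : Measure Ω} {X : ι → Ω → ℕ} {p : ι → ℝ}

lemma measurableSet_forall_eq (hX : IsIndepBernoulli P X p) (S : Finset ι) (c : ι → ℕ) :
    MeasurableSet {ω | ∀ a ∈ S, X a ω = c a} := by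
  simp only [Set.ofPred_forall]
  exact .biInter S.countable_toSet fun a _ ↦ measurableSet_eq_fun (hX.measurable a) measurable_const

variable [IsProbabilityMeasure P]

lemma measureReal_eq_zero (hX : IsIndepBernoulli P X p) (a : ι) :
    P.real {ω | X a ω = 0} = 1 - p a := by
  have hcompl : {ω | X a ω = 0} = {ω | X a ω = 1}ᶜ := by
    ext ω
    rcases hX.zero_or_one a ω with h | h <;> simp [h]
  rw [hcompl, probReal_compl_eq_one_sub (measurableSet_eq_fun (hX.measurable a) measurable_const),
    hX.measureReal_eq_one]

lemma measureReal_forall_eq_ite (hX : IsIndepBernoulli P X p) (S : Finset ι) (q : ι → Prop)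
    [DecidablePred q] :
    P.real {ω | ∀ a ∈ S, X a ω = if q a then 1 else 0} =
      ∏ a ∈ S, if q a then p a else 1 - p a := by
  have hinter : {ω | ∀ a ∈ S, X a ω = if q a then 1 else 0} =
      ⋂ a ∈ S, X a ⁻¹' {if q a then 1 else 0} := by
    ext ω; simp
  rw [hinter, measureReal_def,
    hX.indep.meas_biInter fun a _ ↦ ⟨{if q a then 1 else 0}, measurableSet_singleton _, rfl⟩,
    ENNReal.toReal_prod]
  refine prod_congr rfl fun a _ ↦ ?_
  split_ifs
  · exact hX.measureReal_eq_one a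
  · exact hX.measureReal_eq_zero a

lemma measureReal_forall_sum_eq {κ : Type*} [Fintype κ] {Y : ι × κ → Ω → ℕ} {p : κ → ℝ}
    (hY : IsIndepBernoulli P Y (fun a ↦ p a.2)) (R : Finset ι) (t : κ → ℕ) :
    P.real {ω | ∀ j, ∑ i ∈ R, Y (i, j) ω = t j} = ∏ j, binomialMass #R (t j) (p j) := by
  classical
  -- The event splits along the pattern of ones into disjoint cylinder events.
  set ones : Ω → κ → Finset ι := fun ω j ↦ R.filter fun i ↦ Y (i, j) ω = 1
  set F := Fintype.piFinset fun j ↦ R.powersetCard (t j)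
  have hsum : ∀ ω j, ∑ i ∈ R, Y (i, j) ω = #(ones ω j) := fun ω j ↦ by
    rw [card_filter]
    exact sum_congr rfl fun i _ ↦ by rcases hY.zero_or_one (i, j) ω with h | h <;> simp [h]
  have hevent : {ω | ∀ j, ∑ i ∈ R, Y (i, j) ω = t j} = ones ⁻¹' F := by
    ext ω
    simp [F, hsum, ones]
  have hfiber : ∀ f ∈ F, ones ⁻¹' {f} =
      {ω | ∀ a ∈ R ×ˢ univ, Y a ω = if a.1 ∈ f a.2 then 1 else 0} := by
    intro f hf
    have hfR : ∀ j, f j ⊆ R := fun j ↦ (mem_powersetCard.mp (Fintype.mem_piFinset.mp hf j)).1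
    ext ω
    simp only [Set.mem_preimage, Set.mem_singleton_iff, Set.mem_ofPred_eq, mem_product, mem_univ,
      and_true, Prod.forall, funext_iff, Finset.ext_iff, ones, mem_filter]
    constructor
    · intro h i j hi
      split_ifs with hij
      · exact ((h j i).mpr hij).2
      · exact (hY.zero_or_one (i, j) ω).resolve_right fun h1 ↦ hij ((h j i).mp ⟨hi, h1⟩)
    · intro h j i
      constructor
      · rintro ⟨hi, h1⟩
        by_contra hij
        simp [h i j hi, hij] at h1
      · intro hij
        exact ⟨hfR j hij, by simpa [hij] using h i j (hfR j hij)⟩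
  rw [hevent, ← sum_measureReal_preimage_singleton F fun f hf ↦
      hfiber f hf ▸ hY.measurableSet_forall_eq _ _]
  rw [sum_congr rfl fun f hf ↦ by
    rw [hfiber f hf, hY.measureReal_forall_eq_ite, prod_product_right]]
  calc _ = ∏ j, ∑ T ∈ R.powersetCard (t j), ∏ i ∈ R, (if i ∈ T then p j else 1 - p j) :=
        (prod_univ_sum _ _).symm
    _ = _ := prod_congr rfl fun j _ ↦ sum_powersetCard_prod_ite R (t j) (p j)

end IsIndepBernoulli

section LeftRepeated

variable {Ω : Type*} [MeasurableSpace Ω] {P : Measure Ω} {n d m : ℕ}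
  {X : Fin n → Fin d → Ω → ℕ} {μ : Fin d → ℝ}

lemma LeftRepeated.measureReal_forall_sum_eq [IsProbabilityMeasure P]
    (hX : LeftRepeated P m X μ) (R : Finset (Fin n)) (t : {j : Fin d // m - 1 ≤ (j : ℕ)} → ℕ) :
    P.real {ω | ∀ j : {j : Fin d // m - 1 ≤ (j : ℕ)}, ∑ i ∈ R, X i j.1 ω = t j} =
      ∏ j, binomialMass #R (t j) (μ j) :=
  IsIndepBernoulli.measureReal_forall_sum_eq (p := fun j : {j : Fin d // m - 1 ≤ (j : ℕ)} ↦ μ j)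
    ⟨fun _ ↦ hX.1 _ _, hX.2.1, fun a ↦ (hX.2.2.1 a.1 a.2.1 a.2.2).1,
      fun a ↦ (hX.2.2.1 a.1 a.2.1 a.2.2).2⟩ R t

lemma LeftRepeated.setOf_forall_add_sum_eq (hX : LeftRepeated P m X μ) (jm : Fin d)
    (hjm : (jm : ℕ) = m - 1) (R : Finset (Fin n)) {y k : Fin d → ℕ}
    (hyk : ∀ j : Fin d, m - 1 ≤ (j : ℕ) → y j ≤ k j)
    (hrep : ∀ j : Fin d, (j : ℕ) < m - 1 → k j = k jm ∧ y j = y jm) :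
    {ω | ∀ j, y j + ∑ i ∈ R, X i j ω = k j} =
      {ω | ∀ j : {j : Fin d // m - 1 ≤ (j : ℕ)}, ∑ i ∈ R, X i j.1 ω = k j.1 - y j.1} := by
  ext ω
  constructor
  · intro h j
    have := h j.1
    have := hyk j.1 j.2
    omega
  · intro h j
    by_cases hj : m - 1 ≤ (j : ℕ)
    · have hsum : ∑ i ∈ R, X i j ω = k j - y j := h ⟨j, hj⟩
      have := hyk j hj
      omega
    · have hcopy : ∀ i, X i j = X i jm := fun i ↦ hX.2.2.2 i j (by omega) jm hjm
      obtain ⟨hk, hy⟩ := hrep j (by omega)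
      have hsum : ∑ i ∈ R, X i jm ω = k jm - y jm := h ⟨jm, hjm.ge⟩
      have := hyk jm hjm.ge
      simp only [hcopy, hk, hy]
      omega

end LeftRepeated

/-- **Partial Ratio Equality (side = left).** On a population whose attributes
below the midpoint `m` are exact copies of attribute `m`, the Bayesian decision
ratio equals the likelihood ratio test statistic clipped to attributes `m`
through `d`; in particular the denominator probability is strictly positive. -/
theorem partial_ratio_equality_left {Ω : Type*} [MeasurableSpace Ω]
    (P : Measure Ω) [IsProbabilityMeasure P] (n d m : ℕ)
    (hn : 1 ≤ n) (hd : 1 ≤ d) (hmd : m ≤ d)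
    (μ : Fin d → ℝ) (hμ : ∀ j : Fin d, m - 1 ≤ (j : ℕ) → 0 < μ j ∧ μ j < 1)
    (X : Fin n → Fin d → Ω → ℕ) (hX : LeftRepeated P m X μ)
    (y : Fin d → ℕ) (k : Fin d → ℕ)
    (hyk : ∀ j : Fin d, m - 1 ≤ (j : ℕ) → y j ≤ 1 ∧ y j ≤ k j ∧ k j ≤ n)
    (hrep : ∀ j : Fin d, (j : ℕ) < m - 1 →
      k j = k ⟨m - 1, by omega⟩ ∧ y j = y ⟨m - 1, by omega⟩) :
    0 < (P {ω | ∀ j, (∑ i : Fin n, X i j ω) = k j}).toReal ∧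
    (P {ω | ∀ j, y j + ∑ i ∈ univ.filter (fun i : Fin n => (i : ℕ) < n - 1),
        X i j ω = k j}).toReal /
      (P {ω | ∀ j, (∑ i : Fin n, X i j ω) = k j}).toReal =
    ∏ j ∈ univ.filter (fun j : Fin d => m - 1 ≤ (j : ℕ)),
      (if y j = 1 then ((k j : ℝ) / n) / μ j
        else (1 - (k j : ℝ) / n) / (1 - μ j)) := by
  have hB : P.real {ω | ∀ j, ∑ i : Fin n, X i j ω = k j} =
      ∏ j : {j : Fin d // m - 1 ≤ (j : ℕ)}, binomialMass n (k j) (μ j) := by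
    have hevent := hX.setOf_forall_add_sum_eq ⟨m - 1, by omega⟩ rfl univ (y := 0)
      (fun _ _ ↦ Nat.zero_le _) fun j hj ↦ ⟨(hrep j hj).1, rfl⟩
    simp only [Pi.zero_apply, zero_add, Nat.sub_zero] at hevent
    simpa [hevent] using hX.measureReal_forall_sum_eq univ (k ·)
  have hA : P.real {ω | ∀ j, y j + ∑ i ∈ univ.filter (fun i : Fin n => (i : ℕ) < n - 1),
        X i j ω = k j} =
      ∏ j : {j : Fin d // m - 1 ≤ (j : ℕ)}, binomialMass (n - 1) (k j - y j) (μ j) := by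
    rw [hX.setOf_forall_add_sum_eq ⟨m - 1, by omega⟩ rfl _ (fun j hj ↦ (hyk j hj).2.1) hrep]
    simpa [Fin.card_filter_val_lt] using
      hX.measureReal_forall_sum_eq (univ.filter fun i : Fin n ↦ (i : ℕ) < n - 1) fun j ↦ k j - y j
  simp only [← measureReal_def]
  refine ⟨hB ▸ prod_pos fun j _ ↦ binomialMass_pos (hyk j j.2).2.2 (hμ j j.2).1 (hμ j j.2).2, ?_⟩
  rw [hA, hB, ← prod_div_distrib, prod_subtype (p := fun j : Fin d ↦ m - 1 ≤ (j : ℕ)) _ (by simp)]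
  exact prod_congr rfl fun j _ ↦ binomialMass_pred_div hn (hyk j j.2).1 (hyk j j.2).2.1
    (hyk j j.2).2.2 (hμ j j.2).1 (hμ j j.2).2
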